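/- For grooming factor C = 2, any valid solution satisfies 4A ≥ 6W + N(N−1), where A is the total number of vertices (ADMs) and W the number of parts. Consequently, A(2,N) ≥ ⌈(11N² − 8N − 3)/32⌉. -/

import Mathlib

/-- The load induced on the arc of the directed cycle `C⃗_p` going from `t` to `t+1`
by a set `S` of requests, each request `(i,j)` being routed clockwise from `i` to `j`. -/
def cload (p : ℕ) (S : Finset (ZMod p × ZMod p)) (t : ZMod p) : ℕ :=
  (S.filter fun a => (t - a.1).val < (a.2 - a.1).val).card

/-- The set of vertices (endpoints of arcs) of a digraph given by its arc set. -/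
def verts (p : ℕ) (S : Finset (ZMod p × ZMod p)) : Finset (ZMod p) :=
  S.image Prod.fst ∪ S.image Prod.snd

/-!
A part `S` of load at most 2 spanning `p` vertices has at most `2p - 3` requests. By the load
bound, at most `2p` pairs (request, vertex of `S` on its route) exist. Each request
passes its own start, and the requests passing no other vertex have distinct starts (of two
requests with the same start, the longer one passes the end of the shorter), so `2|S| ≤ 3p`.
Together with `|S| ≤ C(p, 2)` this gives the bound, except for four vertices carrying all six
pairs: labelling them in cyclic order by `ZMod 4` reduces that case to a tournament on the
4-cycle, and some vertex of it lies on three routes.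

Summing over the parts, `2A ≥ |T| + 3W` with `2|T| = N(N - 1)`. For the load bound, the routes of
`T` have total length `N⌊N²/4⌋/2`, while every arc of the cycle carries load at most `2W`; hence
`N² ≤ 16W + 1`, and `32A ≥ 11N² - 8N - 3` follows.
-/

open Finset

namespace ZMod

variable {n : ℕ} [NeZero n]

lemma val_sub_of_lt {a b : ZMod n} (h : a.val < b.val) : (a - b).val = n + a.val - b.val := by
  have hba : b - a ≠ 0 := sub_ne_zero.mpr fun e => h.ne (congrArg val e).symm
  rw [← neg_sub, neg_val, if_neg hba, val_sub h.le]
  have := b.val_lt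
  omega

lemma val_sub_eq_ite (a b : ZMod n) :
    (a - b).val = if b.val ≤ a.val then a.val - b.val else n + a.val - b.val := by
  split_ifs with h
  · exact val_sub h
  · exact val_sub_of_lt (not_le.mp h)

lemma sum_comp_val {M : Type*} [AddCommMonoid M] (g : ℕ → M) :
    ∑ d : ZMod n, g d.val = ∑ ℓ ∈ range n, g ℓ := by
  obtain ⟨k, rfl⟩ := Nat.exists_eq_add_one_of_ne_zero (NeZero.ne n)
  exact Fin.sum_univ_eq_sum_range g (k + 1)

lemma val_sub_add_val_sub {i j : ZMod n} (h : i ≠ j) : (j - i).val + (i - j).val = n := by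
  have := (j - i).val_lt
  rw [← neg_sub j i, neg_val, if_neg (sub_ne_zero.mpr h.symm)]
  omega

lemma val_sub_le_val_sub_of_two_mul_le {i j : ZMod n} (h : 2 * (j - i).val ≤ n) :
    (j - i).val ≤ (i - j).val := by
  rcases eq_or_ne i j with rfl | hij
  · rfl
  · have := val_sub_add_val_sub hij
    omega

end ZMod

lemma four_mul_sum_range_min_add_mod_two (n : ℕ) :
    4 * ∑ ℓ ∈ range n, min ℓ (n - ℓ) + n % 2 = n ^ 2 := by
  induction n using Nat.twoStepInduction with
  | zero => simp
  | one => simp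
  | more n ih _ =>
    have hsum : ∑ ℓ ∈ range (n + 2), min ℓ (n + 2 - ℓ)
        = ∑ ℓ ∈ range n, min ℓ (n - ℓ) + (n + 1) := by
      rw [sum_range_succ', sum_range_succ]
      have hshift : ∀ ℓ ∈ range n, min (ℓ + 1) (n + 2 - (ℓ + 1)) = min ℓ (n - ℓ) + 1 :=
        fun ℓ hℓ => by have := mem_range.mp hℓ; omega
      rw [sum_congr rfl hshift, sum_add_distrib, sum_const, card_range, smul_eq_mul, mul_one]
      omega
    rw [hsum]
    have := Nat.add_mod_right n 2
    ring_nf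
    ring_nf at ih
    omega

abbrev OnRoute {n : ℕ} (a : ZMod n × ZMod n) (t : ZMod n) : Prop :=
  (t - a.1).val < (a.2 - a.1).val

section OnRoute

variable {m n : ℕ}

lemma onRoute_fst_iff {a : ZMod n × ZMod n} : OnRoute a a.1 ↔ a.1 ≠ a.2 := by
  rw [OnRoute, sub_self, ZMod.val_zero, pos_iff_ne_zero, Ne, ZMod.val_eq_zero, sub_eq_zero,
    eq_comm]

variable [NeZero m] [NeZero n]

lemma onRoute_iff {a : ZMod n × ZMod n} {t : ZMod n} :
    OnRoute a t ↔ if a.1.val ≤ a.2.val then a.1.val ≤ t.val ∧ t.val < a.2.val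
      else a.1.val ≤ t.val ∨ t.val < a.2.val := by
  have := t.val_lt
  have := a.1.val_lt
  have := a.2.val_lt
  rw [OnRoute, ZMod.val_sub_eq_ite, ZMod.val_sub_eq_ite]
  split_ifs <;> omega

lemma onRoute_map_iff {f : ZMod m → ZMod n} (hf : ∀ i j, i.val < j.val → (f i).val < (f j).val)
    (a : ZMod m × ZMod m) (t : ZMod m) : OnRoute (f a.1, f a.2) (f t) ↔ OnRoute a t := by
  have hlt : ∀ i j, (f i).val < (f j).val ↔ i.val < j.val := fun i j =>
    ⟨fun h => not_le.mp fun hji => h.not_ge <| hji.lt_or_eq.elim (fun h' => (hf j i h').le)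
      fun e => (congrArg (fun k => (f k).val) (ZMod.val_injective m e)).le, hf i j⟩
  simp only [onRoute_iff, ← not_lt, hlt]

lemma card_onRoute (a : ZMod n × ZMod n) : #{t | OnRoute a t} = (a.2 - a.1).val := by
  rw [card_filter, ← Equiv.sum_comp (Equiv.addRight a.1)]
  simp only [OnRoute, Equiv.coe_addRight, add_sub_cancel_right]
  rw [ZMod.sum_comp_val (fun k => if k < (a.2 - a.1).val then 1 else 0), ← card_filter]
  have : {k ∈ range n | k < (a.2 - a.1).val} = range (a.2 - a.1).val := by
    ext k
    simp only [mem_filter, mem_range]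
    have := (a.2 - a.1).val_lt
    omega
  rw [this, card_range]

lemma sum_cload (S : Finset (ZMod n × ZMod n)) :
    ∑ t, cload n S t = ∑ a ∈ S, (a.2 - a.1).val := by
  simp only [← card_onRoute]
  exact (sum_card_bipartiteAbove_eq_sum_card_bipartiteBelow OnRoute).symm

end OnRoute

lemma exists_three_onRoute_of_diagonals (R : ZMod 4 → ZMod 4 → Prop)
    (hR : ∀ i j, i ≠ j → R i j ∨ R j i) (i : ZMod 4) (h₁ : R i (i + 2)) (h₂ : R (i + 3) (i + 1)) :
    ∃ t : ZMod 4, ∃ a b c : ZMod 4 × ZMod 4, (R a.1 a.2 ∧ R b.1 b.2 ∧ R c.1 c.2) ∧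
      a ≠ b ∧ a ≠ c ∧ b ≠ c ∧ OnRoute a t ∧ OnRoute b t ∧ OnRoute c t := by
  -- Both diagonal routes pass through `i`, and so does one of the sides at `i` unless both
  -- sides end at `i`; then `i + 3` lies on three routes.
  have hne : i ≠ i + 1 ∧ i ≠ i + 3 := by generalize i = k; revert k; decide
  rcases hR i (i + 1) hne.1 with h₃ | h₃
  · exact ⟨i, (i, i + 2), (i + 3, i + 1), (i, i + 1), ⟨h₁, h₂, h₃⟩,
      by generalize i = k; revert k; decide⟩
  rcases hR i (i + 3) hne.2 with h₄ | h₄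
  · exact ⟨i, (i, i + 2), (i + 3, i + 1), (i, i + 3), ⟨h₁, h₂, h₄⟩,
      by generalize i = k; revert k; decide⟩
  · exact ⟨i + 3, (i + 3, i + 1), (i + 1, i), (i + 3, i), ⟨h₂, h₃, h₄⟩,
      by generalize i = k; revert k; decide⟩

lemma exists_three_onRoute_of_tournament (R : ZMod 4 → ZMod 4 → Prop)
    (hR : ∀ i j, i ≠ j → R i j ∨ R j i) :
    ∃ t : ZMod 4, ∃ a b c : ZMod 4 × ZMod 4, (R a.1 a.2 ∧ R b.1 b.2 ∧ R c.1 c.2) ∧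
      a ≠ b ∧ a ≠ c ∧ b ≠ c ∧ OnRoute a t ∧ OnRoute b t ∧ OnRoute c t := by
  rcases hR 0 2 (by decide) with h₀₂ | h₂₀ <;> rcases hR 1 3 (by decide) with h₁₃ | h₃₁
  · exact exists_three_onRoute_of_diagonals R hR 1 h₁₃ h₀₂
  · exact exists_three_onRoute_of_diagonals R hR 0 h₀₂ h₃₁
  · exact exists_three_onRoute_of_diagonals R hR 2 h₂₀ h₁₃
  · exact exists_three_onRoute_of_diagonals R hR 3 h₃₁ h₂₀

lemma Finset.pair_eq_pair_iff {α : Type*} [DecidableEq α] {a b c d : α} :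
    ({a, b} : Finset α) = {c, d} ↔ a = c ∧ b = d ∨ a = d ∧ b = c := by
  rw [← coe_inj, coe_pair, coe_pair, Set.pair_eq_pair_iff]

def IsOriented {α : Type*} (S : Finset (α × α)) : Prop :=
  ∀ a ∈ S, a.1 ≠ a.2 ∧ a.swap ∉ S

lemma IsOriented.mono {α : Type*} {S T : Finset (α × α)} (hT : IsOriented T) (hST : S ⊆ T) :
    IsOriented S :=
  fun a ha => ⟨(hT a (hST ha)).1, fun h => (hT a (hST ha)).2 (hST h)⟩

section Oriented

variable {N : ℕ} {S : Finset (ZMod N × ZMod N)}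

lemma mem_verts_fst {a : ZMod N × ZMod N} (ha : a ∈ S) : a.1 ∈ verts N S :=
  mem_union_left _ (mem_image_of_mem _ ha)

lemma mem_verts_snd {a : ZMod N × ZMod N} (ha : a ∈ S) : a.2 ∈ verts N S :=
  mem_union_right _ (mem_image_of_mem _ ha)

lemma IsOriented.pair_mem_powersetCard (hS : IsOriented S) {a : ZMod N × ZMod N} (ha : a ∈ S) :
    {a.1, a.2} ∈ (verts N S).powersetCard 2 :=
  mem_powersetCard.mpr ⟨insert_subset (mem_verts_fst ha) (singleton_subset_iff.mpr
    (mem_verts_snd ha)), card_pair (hS a ha).1⟩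

lemma IsOriented.injOn_pair (hS : IsOriented S) :
    Set.InjOn (fun a : ZMod N × ZMod N => ({a.1, a.2} : Finset (ZMod N))) S := by
  intro a ha b hb hab
  rcases Finset.pair_eq_pair_iff.mp hab with ⟨h₁, h₂⟩ | ⟨h₁, h₂⟩
  · exact Prod.ext h₁ h₂
  · exact ((hS b hb).2 (by rwa [show b.swap = a from Prod.ext h₁.symm h₂.symm])).elim

lemma IsOriented.card_le_choose (hS : IsOriented S) : #S ≤ (#(verts N S)).choose 2 := by
  rw [← card_powersetCard]
  exact card_le_card_of_injOn _ (fun a ha => hS.pair_mem_powersetCard ha) hS.injOn_pair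

lemma IsOriented.mem_or_swap_mem (hS : IsOriented S) (h : #S = (#(verts N S)).choose 2)
    {x y : ZMod N} (hx : x ∈ verts N S) (hy : y ∈ verts N S) (hxy : x ≠ y) :
    (x, y) ∈ S ∨ (y, x) ∈ S := by
  have himage : S.image (fun a => ({a.1, a.2} : Finset (ZMod N))) = (verts N S).powersetCard 2 :=
    eq_of_subset_of_card_le (image_subset_iff.mpr fun a ha => hS.pair_mem_powersetCard ha)
      (by rw [card_powersetCard, card_image_of_injOn hS.injOn_pair, h])
  have hxy' : {x, y} ∈ (verts N S).powersetCard 2 :=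
    mem_powersetCard.mpr ⟨insert_subset hx (singleton_subset_iff.mpr hy), card_pair hxy⟩
  obtain ⟨a, ha, hpair⟩ := mem_image.mp (himage ▸ hxy')
  rcases Finset.pair_eq_pair_iff.mp hpair with ⟨h₁, h₂⟩ | ⟨h₁, h₂⟩
  · exact .inl (h₁ ▸ h₂ ▸ ha)
  · exact .inr (h₁ ▸ h₂ ▸ ha)


end Oriented

section Part

variable {N : ℕ} [NeZero N] {S : Finset (ZMod N × ZMod N)}

lemma exists_labelling_of_card_eq {m : ℕ} [NeZero m] {P : Finset (ZMod N)} (hP : #P = m) :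
    ∃ v : ZMod m → ZMod N, (∀ i, v i ∈ P) ∧ ∀ i j, i.val < j.val → (v i).val < (v j).val := by
  have hQ : #(P.image ZMod.val) = m := by rw [card_image_of_injective _ (ZMod.val_injective N), hP]
  set e := (P.image ZMod.val).orderEmbOfFin hQ
  have he : ∀ k, ∃ w ∈ P, w.val = e k := fun k => mem_image.mp (orderEmbOfFin_mem _ hQ k)
  choose w hwP hw using he
  refine ⟨fun i => w ⟨i.val, i.val_lt⟩, fun i => hwP _, fun i j hij => ?_⟩
  simp only [hw]
  exact e.strictMono (Fin.mk_lt_mk.mpr hij)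

lemma card_ne_six_of_card_verts_eq_four (hS : IsOriented S) (hload : ∀ t, cload N S t ≤ 2)
    (hP : #(verts N S) = 4) : #S ≠ 6 := by
  intro h6
  obtain ⟨v, hvP, hv⟩ := exists_labelling_of_card_eq (m := 4) hP
  have hvinj : Function.Injective v := fun i j h => by
    by_contra hij
    rcases lt_or_gt_of_ne (fun e => hij (ZMod.val_injective 4 e)) with h' | h'
    · exact (hv i j h').ne (congrArg ZMod.val h)
    · exact (hv j i h').ne (congrArg ZMod.val h).symm
  obtain ⟨t, a, b, c, ⟨ha, hb, hc⟩, hab, hac, hbc, hta, htb, htc⟩ :=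
    exists_three_onRoute_of_tournament (fun i j => (v i, v j) ∈ S) fun i j hij =>
      hS.mem_or_swap_mem (by rw [hP, h6]; rfl) (hvP i) (hvP j) (hvinj.ne hij)
  have hinj : Function.Injective (Prod.map v v) := hvinj.prodMap hvinj
  have h3 : 2 < cload N S (v t) := two_lt_card_iff.mpr
    ⟨_, _, _, mem_filter.mpr ⟨ha, (onRoute_map_iff hv a t).mpr hta⟩,
      mem_filter.mpr ⟨hb, (onRoute_map_iff hv b t).mpr htb⟩,
      mem_filter.mpr ⟨hc, (onRoute_map_iff hv c t).mpr htc⟩,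
      hinj.ne hab, hinj.ne hac, hinj.ne hbc⟩
  exact (hload (v t)).not_gt h3

lemma two_mul_card_le_three_mul_card_verts (hloop : ∀ a ∈ S, a.1 ≠ a.2)
    (hload : ∀ t, cload N S t ≤ 2) : 2 * #S ≤ 3 * #(verts N S) := by
  set P := verts N S
  set g := fun a => #{v ∈ P | OnRoute a v}
  have hsum : ∑ a ∈ S, g a ≤ 2 * #P :=
    calc ∑ a ∈ S, g a = ∑ v ∈ P, cload N S v :=
          sum_card_bipartiteAbove_eq_sum_card_bipartiteBelow OnRoute
      _ ≤ ∑ v ∈ P, 2 := sum_le_sum fun v _ => hload v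
      _ = 2 * #P := by rw [sum_const, smul_eq_mul, mul_comm]
  have hstart : ∀ a ∈ S, a.1 ∈ {v ∈ P | OnRoute a v} := fun a ha =>
    mem_filter.mpr ⟨mem_verts_fst ha, onRoute_fst_iff.mpr (hloop a ha)⟩
  have hlonger : ∀ a ∈ S, ∀ b ∈ S, a.1 = b.1 → (a.2 - a.1).val < (b.2 - b.1).val → 2 ≤ g b :=
    fun a ha b hb hfst hlt => one_lt_card.mpr ⟨b.1, hstart b hb, a.2,
      mem_filter.mpr ⟨mem_verts_snd ha, by simpa only [OnRoute, hfst] using hlt⟩, hfst ▸ hloop a ha⟩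
  have hunit : #{a ∈ S | g a = 1} ≤ #P := by
    refine card_le_card_of_injOn Prod.fst (fun a ha => mem_verts_fst (mem_filter.mp ha).1) ?_
    intro a ha b hb hfst
    obtain ⟨haS, hga⟩ := mem_filter.mp ha
    obtain ⟨hbS, hgb⟩ := mem_filter.mp hb
    rcases lt_trichotomy (a.2 - a.1).val (b.2 - b.1).val with hlt | heq | hgt
    · exact absurd (hlonger a haS b hbS hfst hlt) (by omega)
    · refine Prod.ext hfst ?_
      simpa [hfst] using ZMod.val_injective N heq
    · exact absurd (hlonger b hbS a haS hfst.symm hgt) (by omega)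
  have hcount : 2 * #S ≤ ∑ a ∈ S, g a + #{a ∈ S | g a = 1} := by
    rw [card_filter, ← sum_add_distrib, mul_comm, ← smul_eq_mul, ← sum_const]
    refine sum_le_sum fun a ha => ?_
    have : 1 ≤ g a := card_pos.mpr ⟨_, hstart a ha⟩
    split_ifs <;> omega
  omega

lemma card_add_three_le_two_mul_card_verts (hS : IsOriented S) (hne : S.Nonempty)
    (hload : ∀ t, cload N S t ≤ 2) : #S + 3 ≤ 2 * #(verts N S) := by
  have hloop : ∀ a ∈ S, a.1 ≠ a.2 := fun a ha => (hS a ha).1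
  have hthree := two_mul_card_le_three_mul_card_verts hloop hload
  have hchoose := Nat.choose_two_right _ ▸ hS.card_le_choose
  have hfour : #(verts N S) = 4 → #S ≠ 6 := card_ne_six_of_card_verts_eq_four hS hload
  have htwo : 2 ≤ #(verts N S) := by
    obtain ⟨a, ha⟩ := hne
    exact one_lt_card.mpr ⟨a.1, mem_verts_fst ha, a.2, mem_verts_snd ha, hloop a ha⟩
  generalize #(verts N S) = p at *
  rcases lt_or_ge p 6 with hp | hp
  · interval_cases p <;> omega
  · omega

end Part

def IsTournament {α : Type*} (T : Finset (α × α)) : Prop :=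
  ∀ a, a ∈ T ↔ a.1 ≠ a.2 ∧ a.swap ∉ T

section Tournament

variable {α : Type*} {T : Finset (α × α)}

lemma IsTournament.isOriented (hT : IsTournament T) : IsOriented T :=
  fun a ha => (hT a).mp ha

lemma IsTournament.two_nsmul_sum_eq_sum_offDiag [Fintype α] [DecidableEq α] {M : Type*}
    [AddCommMonoid M] (hT : IsTournament T) (f : α × α → M) (hf : ∀ a, f a.swap = f a) :
    2 • ∑ a ∈ T, f a = ∑ a ∈ univ.offDiag, f a := by
  have hsplit : univ.offDiag = T ∪ T.image Prod.swap := by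
    ext a
    simp only [mem_offDiag, mem_univ, true_and, mem_union, mem_image]
    refine ⟨fun h => or_iff_not_imp_left.mpr fun ha => ⟨a.swap, ?_, a.swap_swap⟩, ?_⟩
    · exact (hT a.swap).mpr ⟨h.symm, by rwa [Prod.swap_swap]⟩
    · rintro (ha | ⟨b, hb, rfl⟩)
      · exact ((hT a).mp ha).1
      · exact ((hT b).mp hb).1.symm
  have hdisj : Disjoint T (T.image Prod.swap) := disjoint_left.mpr fun a ha ha' => by
    obtain ⟨b, hb, rfl⟩ := mem_image.mp ha'
    exact ((hT b).mp hb).2 ha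
  rw [hsplit, sum_union hdisj, sum_image Prod.swap_injective.injOn, two_nsmul]
  simp only [hf]

end Tournament

lemma sum_eq_sum_sum_of_partition {α ι M : Type*} [DecidableEq α] [Fintype ι] [AddCommMonoid M]
    {T : Finset α} {B : ι → Finset α} (hdisj : ∀ i j, i ≠ j → Disjoint (B i) (B j))
    (hcover : ∀ a, a ∈ T ↔ ∃ i, a ∈ B i) (f : α → M) :
    ∑ a ∈ T, f a = ∑ i, ∑ a ∈ B i, f a := by
  have : T = univ.biUnion B := by ext a; simp [hcover]
  rw [this, sum_biUnion fun i _ j _ h => hdisj i j h]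

section Shortest

variable {N : ℕ} [NeZero N] {T : Finset (ZMod N × ZMod N)}

lemma isTournament_of_shortest (hT1 : ∀ a ∈ T, a.1 ≠ a.2 ∧ 2 * (a.2 - a.1).val ≤ N)
    (hT2 : ∀ i j : ZMod N, i ≠ j → 2 * (j - i).val < N → (i, j) ∈ T)
    (hT3 : ∀ i j : ZMod N, 2 * (j - i).val = N → ((i, j) ∈ T ↔ (j, i) ∉ T)) :
    IsTournament T := by
  rintro ⟨i, j⟩
  simp only [Prod.swap_prod_mk]
  refine ⟨fun h => ⟨(hT1 _ h).1, fun h' => ?_⟩, fun ⟨hij, hji⟩ => ?_⟩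
  · have : (j - i).val + (i - j).val = N := ZMod.val_sub_add_val_sub (hT1 _ h).1
    have hij : 2 * (j - i).val ≤ N := (hT1 _ h).2
    have hji : 2 * (i - j).val ≤ N := (hT1 _ h').2
    exact (hT3 i j (by omega)).mp h h'
  · have := ZMod.val_sub_add_val_sub hij
    rcases lt_trichotomy (2 * (j - i).val) N with hlt | heq | hgt
    · exact hT2 i j hij hlt
    · exact (hT3 i j heq).mpr hji
    · exact absurd (hT2 j i hij.symm (by omega)) hji

lemma IsTournament.two_mul_card (hT : IsTournament T) : 2 * #T = N * N - N := by
  have := hT.two_nsmul_sum_eq_sum_offDiag (fun _ => 1) fun _ => rfl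
  simpa [offDiag_card] using this

lemma IsTournament.two_mul_sum_val_sub (hT : IsTournament T)
    (hshort : ∀ a ∈ T, (a.2 - a.1).val ≤ (a.1 - a.2).val) :
    2 * ∑ a ∈ T, (a.2 - a.1).val = N * ∑ ℓ ∈ range N, min ℓ (N - ℓ) := by
  set d := fun a : ZMod N × ZMod N => min (a.2 - a.1).val (a.1 - a.2).val
  have hrow : ∀ i : ZMod N, ∑ j, d (i, j) = ∑ x : ZMod N, min x.val (N - x.val) := fun i => by
    rw [← Equiv.sum_comp (Equiv.addRight i)]
    refine sum_congr rfl fun x _ => ?_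
    simp only [d, Equiv.coe_addRight, add_sub_cancel_right, sub_add_cancel_right, ZMod.neg_val]
    split_ifs with hx <;> simp [hx]
  calc 2 * ∑ a ∈ T, (a.2 - a.1).val = 2 • ∑ a ∈ T, d a := by
        rw [smul_eq_mul, sum_congr rfl fun a ha => (min_eq_left (hshort a ha)).symm]
    _ = ∑ a ∈ univ.offDiag, d a := hT.two_nsmul_sum_eq_sum_offDiag d fun _ => min_comm _ _
    _ = ∑ a, d a := sum_subset (subset_univ _) fun a _ ha => by
        rw [mem_offDiag, not_and, not_and, not_not] at ha
        simp [d, ha (mem_univ _) (mem_univ _)]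
    _ = ∑ i, ∑ j, d (i, j) := Fintype.sum_prod_type d
    _ = N * ∑ ℓ ∈ range N, min ℓ (N - ℓ) := by
        rw [sum_congr rfl fun i _ => hrow i, sum_const, card_univ, ZMod.card, smul_eq_mul,
          ZMod.sum_comp_val fun ℓ => min ℓ (N - ℓ)]

end Shortest

lemma sq_le_sixteen_mul_add_one {N W : ℕ} [NeZero N] {T : Finset (ZMod N × ZMod N)}
    (hT : IsTournament T) (hshort : ∀ a ∈ T, (a.2 - a.1).val ≤ (a.1 - a.2).val)
    {B : Fin W → Finset (ZMod N × ZMod N)} (hdisj : ∀ w w', w ≠ w' → Disjoint (B w) (B w'))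
    (hcover : ∀ a, a ∈ T ↔ ∃ w, a ∈ B w) (hload : ∀ w t, cload N (B w) t ≤ 2) :
    N ^ 2 ≤ 16 * W + 1 := by
  have hloadT : ∀ t, cload N T t ≤ 2 * W := fun t =>
    calc cload N T t = ∑ w, cload N (B w) t := by
          simp only [cload, card_filter]
          exact sum_eq_sum_sum_of_partition hdisj hcover _
      _ ≤ ∑ _w : Fin W, 2 := sum_le_sum fun w _ => hload w t
      _ = 2 * W := by simp [mul_comm]
  have htotal : ∑ a ∈ T, (a.2 - a.1).val ≤ N * (2 * W) :=
    calc ∑ a ∈ T, (a.2 - a.1).val = ∑ t, cload N T t := (sum_cload T).symm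
      _ ≤ ∑ _t : ZMod N, 2 * W := sum_le_sum fun t _ => hloadT t
      _ = N * (2 * W) := by rw [sum_const, card_univ, ZMod.card, smul_eq_mul]
  have hlen := hT.two_mul_sum_val_sub hshort
  have hmin : ∑ ℓ ∈ range N, min ℓ (N - ℓ) ≤ 4 * W :=
    Nat.le_of_mul_le_mul_left (by linarith) (NeZero.pos N)
  have := four_mul_sum_range_min_add_mod_two N
  omega

lemma card_add_three_mul_le_two_mul_sum_card_verts {N W : ℕ} [NeZero N]
    {T : Finset (ZMod N × ZMod N)} (hT : IsOriented T) {B : Fin W → Finset (ZMod N × ZMod N)}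
    (hne : ∀ w, (B w).Nonempty) (hdisj : ∀ w w', w ≠ w' → Disjoint (B w) (B w'))
    (hcover : ∀ a, a ∈ T ↔ ∃ w, a ∈ B w) (hload : ∀ w t, cload N (B w) t ≤ 2) :
    #T + 3 * W ≤ 2 * ∑ w, #(verts N (B w)) :=
  calc #T + 3 * W = ∑ w, (#(B w) + 3) := by
        rw [sum_add_distrib, card_eq_sum_ones, sum_eq_sum_sum_of_partition hdisj hcover]
        simp [mul_comm]
    _ ≤ ∑ w, 2 * #(verts N (B w)) := sum_le_sum fun w _ =>
        card_add_three_le_two_mul_card_verts (hT.mono fun a ha => (hcover a).mpr ⟨w, ha⟩)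
          (hne w) (hload w)
    _ = 2 * ∑ w, #(verts N (B w)) := (mul_sum _ _ _).symm

theorem stmt_11 (N W : ℕ) (hN : 2 ≤ N)
    -- `T` is the tournament of requests: all shortest clockwise arcs, with exactly one
    -- arc chosen per diametrical pair when `N` is even.
    (T : Finset (ZMod N × ZMod N))
    (hT1 : ∀ a ∈ T, a.1 ≠ a.2 ∧ 2 * (a.2 - a.1).val ≤ N)
    (hT2 : ∀ i j : ZMod N, i ≠ j → 2 * (j - i).val < N → (i, j) ∈ T)
    (hT3 : ∀ i j : ZMod N, 2 * (j - i).val = N → ((i, j) ∈ T ↔ (j, i) ∉ T))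
    -- a valid partition of the requests into `W` nonempty parts, each of load at most 2
    (B : Fin W → Finset (ZMod N × ZMod N))
    (hne : ∀ w, (B w).Nonempty)
    (hdisj : ∀ w w', w ≠ w' → Disjoint (B w) (B w'))
    (hcover : ∀ a : ZMod N × ZMod N, a ∈ T ↔ ∃ w, a ∈ B w)
    (hload : ∀ w, ∀ t : ZMod N, cload N (B w) t ≤ 2) :
    4 * (∑ w : Fin W, (verts N (B w)).card) ≥ 6 * W + N * (N - 1) ∧
      ⌈(11 * (N : ℚ) ^ 2 - 8 * (N : ℚ) - 3) / 32⌉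
        ≤ ((∑ w : Fin W, (verts N (B w)).card : ℕ) : ℤ) := by
  have : NeZero N := ⟨by omega⟩
  have hT := isTournament_of_shortest hT1 hT2 hT3
  have hshort : ∀ a ∈ T, (a.2 - a.1).val ≤ (a.1 - a.2).val := fun a ha =>
    ZMod.val_sub_le_val_sub_of_two_mul_le (hT1 a ha).2
  have hparts := card_add_three_mul_le_two_mul_sum_card_verts hT.isOriented hne hdisj hcover hload
  have hcard := hT.two_mul_card
  have hW := sq_le_sixteen_mul_add_one hT hshort hdisj hcover hload
  have hNN : N * (N - 1) = N * N - N := Nat.mul_sub_one N N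
  have hNle : N ≤ N * N := Nat.le_mul_self N
  refine ⟨by omega, ?_⟩
  have hnat : 11 * N ^ 2 ≤ 32 * ∑ w, #(verts N (B w)) + 8 * N + 3 := by
    rw [sq] at hW ⊢
    omega
  have hrat : (11 * N ^ 2 : ℚ) ≤ 32 * ((∑ w, #(verts N (B w)) : ℕ) : ℚ) + 8 * N + 3 := by
    exact_mod_cast hnat
  rw [Int.ceil_le, div_le_iff₀ (by norm_num)]
  push_cast at hrat ⊢
  linarith
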